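/- Let n ≥ 1, let λ : Fin n → ℤ be a weight such that i ↦ λ i + ρ i is injective, and let σ be a permutation of Fin n such that σ • λ is non-increasing. Then the number of inversions of σ, i.e. the cardinality of {(i, j) : i < j and σ i > σ j}, equals the cardinality of {(i, j) : i < j and λ i + ρ i < λ j + ρ j}. -/

import Mathlib

/-- The shifted half sum of positive roots of `GL(n)`: `ρ i = (n - 1) - i`. -/
def rho (n : ℕ) : Fin n → ℤ := fun i => ((n : ℤ) - 1) - (i : ℤ)

/-- The dot action of a permutation on a `GL(n)`-weight:
`(σ • λ) i = λ (σ⁻¹ i) + ρ (σ⁻¹ i) - ρ i`, i.e. `σ • λ = σ(λ + ρ) - ρ`. -/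
def dotAct {n : ℕ} (σ : Equiv.Perm (Fin n)) (l : Fin n → ℤ) : Fin n → ℤ :=
  fun i => l (σ⁻¹ i) + rho n (σ⁻¹ i) - rho n i

/-!
Since `ρ` is strictly decreasing, dominance of `σ • λ = σ(λ + ρ) - ρ` forces `σ(λ + ρ)` to be
strictly decreasing. Hence on every pair `i < j` the values of `λ + ρ` are ordered opposite to
those of `σ`, so the inversions of `σ` are exactly the pairs on which `λ + ρ` increases.
-/

theorem rho_strictAnti (n : ℕ) : StrictAnti (rho n) := fun i j hij => by
  have : (i : ℤ) < j := by exact_mod_cast hij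
  simp only [rho]
  omega

theorem dotAct_add_rho {n : ℕ} (σ : Equiv.Perm (Fin n)) (l : Fin n → ℤ) (i : Fin n) :
    dotAct σ l i + rho n i = l (σ⁻¹ i) + rho n (σ⁻¹ i) :=
  sub_add_cancel _ _

theorem strictAnti_add_rho_comp_inv_of_antitone_dotAct {n : ℕ} {σ : Equiv.Perm (Fin n)}
    {l : Fin n → ℤ} (hdom : Antitone (dotAct σ l)) :
    StrictAnti ((fun i => l i + rho n i) ∘ ⇑σ⁻¹) := by
  have h := hdom.add_strictAnti (rho_strictAnti n)
  simp only [dotAct_add_rho] at h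
  exact h

theorem Equiv.Perm.lt_iff_lt_of_strictAnti_comp_inv {α β : Type*} [LinearOrder α] [Preorder β]
    {σ : Equiv.Perm α} {f : α → β} (hf : StrictAnti (f ∘ ⇑σ⁻¹)) {a b : α} :
    f a < f b ↔ σ b < σ a := by
  simpa using hf.lt_iff_gt (a := σ a) (b := σ b)

theorem length_of_dominant_perm_general (n : ℕ) (l : Fin n → ℤ)
    (σ : Equiv.Perm (Fin n))
    (hdom : ∀ i j : Fin n, i ≤ j → dotAct σ l j ≤ dotAct σ l i) :
    (Finset.univ.filter
        (fun p : Fin n × Fin n => p.1 < p.2 ∧ σ p.2 < σ p.1)).card =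
    (Finset.univ.filter
        (fun p : Fin n × Fin n =>
          p.1 < p.2 ∧ l p.1 + rho n p.1 < l p.2 + rho n p.2)).card := by
  have hanti := strictAnti_add_rho_comp_inv_of_antitone_dotAct hdom
  congr 1
  exact Finset.filter_congr fun p _ =>
    and_congr_right fun _ => (σ.lt_iff_lt_of_strictAnti_comp_inv hanti).symm

/-- If `λ + ρ` is injective and `σ • λ` is dominant, then the length (number of
inversions) of `σ` equals the number of pairs `i < j` with
`(λ + ρ) i < (λ + ρ) j`. -/
theorem length_of_dominant_perm (n : ℕ) (hn : 1 ≤ n) (l : Fin n → ℤ)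
    (σ : Equiv.Perm (Fin n))
    (hinj : Function.Injective (fun i : Fin n => l i + rho n i))
    (hdom : ∀ i j : Fin n, i ≤ j → dotAct σ l j ≤ dotAct σ l i) :
    (Finset.univ.filter
        (fun p : Fin n × Fin n => p.1 < p.2 ∧ σ p.2 < σ p.1)).card =
    (Finset.univ.filter
        (fun p : Fin n × Fin n =>
          p.1 < p.2 ∧ l p.1 + rho n p.1 < l p.2 + rho n p.2)).card :=
  length_of_dominant_perm_general n l σ hdom
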